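/- For every ℓ ≥ 1, there is no finite family F ⊆ R_{≤ℓ−1} of languages over Σ_2 with C_ℓ ⊆ ⋃_{K ∈ F} K; that is, covering C_ℓ by members of R requires concatenations of length at least ℓ. -/

import Mathlib

set_option linter.unusedVariables false

/-! ### Alphabet, effects, Dyck languages -/

abbrev Sig (n : ℕ) := Fin n × Bool

def letterEff {n : ℕ} (a : Sig n) : Fin n → ℤ :=
  fun j => if j = a.1 then (if a.2 then 1 else -1) else 0

def wordEff {n : ℕ} (w : List (Sig n)) : Fin n → ℤ :=
  (w.map letterEff).sum

/-- The Dyck language `D_n`. -/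
def Dyck (n : ℕ) : Language (Sig n) :=
  {w | wordEff w = 0 ∧ ∀ u, u <+: w → ∀ j, 0 ≤ wordEff u j}

/-- The coverability Dyck language `D_n^↑`. -/
def CovDyck (n : ℕ) : Language (Sig n) :=
  {w | ∀ u, u <+: w → ∀ j, 0 ≤ wordEff u j}

/-- The `ℤ`-Dyck language `D_n^ℤ`. -/
def ZDyck (n : ℕ) : Language (Sig n) :=
  {w | wordEff w = 0}

/-! ### VASS -/

structure VASS (A : Type) where
  Q : Type
  C : Type
  finQ : Finite Q
  finC : Finite C
  E : Set (Q × Option A × (C → ℤ) × Q)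
  finE : E.Finite

inductive VASS.NRun {A : Type} (V : VASS A) :
    (V.Q × (V.C → ℕ)) → List A → (V.Q × (V.C → ℕ)) → Prop
  | refl (cfg : V.Q × (V.C → ℕ)) : VASS.NRun V cfg [] cfg
  | step {q : V.Q} {c : V.C → ℕ} {a : Option A} {d : V.C → ℤ} {q' : V.Q}
      {c' : V.C → ℕ} {w : List A} {last : V.Q × (V.C → ℕ)} :
      (q, a, d, q') ∈ V.E →
      (∀ j, (c' j : ℤ) = (c j : ℤ) + d j) →
      VASS.NRun V (q', c') w last →
      VASS.NRun V (q, c) (a.toList ++ w) last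

/-- An initialized VASS: generalized initial/final configurations,
with `none` playing the role of `ω`. -/
structure InitVASS (A : Type) extends VASS A where
  qin : Q
  qout : Q
  cin : C → Option ℕ
  cout : C → Option ℕ

/-- The reachability language of an initialized VASS. -/
def InitVASS.lang {A : Type} (V : InitVASS A) : Language A :=
  {w | ∃ c0 cl : V.C → ℕ,
      V.toVASS.NRun (V.qin, c0) w (V.qout, cl) ∧
      (∀ j m, V.cin j = some m → c0 j = m) ∧
      (∀ j m, V.cout j = some m → cl j = m)}

/-! ### Transducers -/

structure Transducer (G A : Type) where
  Q : Type
  finQ : Finite Q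
  start : Q
  accept : Set Q
  trans : Set (Q × (Option G × Option A) × Q)
  finT : trans.Finite

inductive Transducer.Path {G A : Type} (T : Transducer G A) :
    T.Q → List G → List A → T.Q → Prop
  | refl (q : T.Q) : Transducer.Path T q [] [] q
  | step {q q' qf : T.Q} {g : Option G} {a : Option A} {u : List G} {v : List A} :
      (q, (g, a), q') ∈ T.trans →
      Transducer.Path T q' u v qf →
      Transducer.Path T q (g.toList ++ u) (a.toList ++ v) qf

/-- The relation recognized by a transducer. -/
def Transducer.rel {G A : Type} (T : Transducer G A) (u : List G) (v : List A) : Prop :=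
  ∃ qf ∈ T.accept, T.Path T.start u v qf

/-- `T⁻¹(L)`. -/
def Transducer.invImage {G A : Type} (T : Transducer G A) (L : Language A) : Language G :=
  {u | ∃ v ∈ L, T.rel u v}

/-! ### Regular separability -/

def RegSep {A : Type} (L1 L2 : Language A) : Prop :=
  ∃ R : Language A, R.IsRegular ∧ L1 ≤ R ∧ ∀ w ∈ R, w ∉ L2

/-! ### Linear sets and regular approximations -/

structure LinSet (n : ℕ) where
  base : Fin n → ℤ
  periods : Set (Fin n → ℤ)
  finP : periods.Finite

def LinSet.toSet {n : ℕ} (L : LinSet n) : Set (Fin n → ℤ) :=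
  {x | ∃ p ∈ AddSubmonoid.closure L.periods, x = L.base + p}

def inBox {n : ℕ} (k : ℕ) (x : Fin n → ℤ) : Prop :=
  ∀ j, -(k : ℤ) ≤ x j ∧ x j ≤ (k : ℤ)

/-- Reachability in the ε-NFA underlying the `k`-th regular approximation of `L`:
states are vectors in `[-k,k]^n`, letters move by their effect, ε-transitions
subtract a period. -/
inductive KReach {n : ℕ} (L : LinSet n) (k : ℕ) :
    (Fin n → ℤ) → List (Sig n) → (Fin n → ℤ) → Prop
  | refl (x : Fin n → ℤ) (h : inBox k x) : KReach L k x [] x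
  | letter {x y : Fin n → ℤ} {w : List (Sig n)} (a : Sig n)
      (h : inBox k x) (h' : inBox k (x + letterEff a)) :
      KReach L k (x + letterEff a) w y → KReach L k x (a :: w) y
  | eps {x y : Fin n → ℤ} {w : List (Sig n)} {p : Fin n → ℤ}
      (hp : p ∈ L.periods) (h : inBox k x) (h' : inBox k (x - p)) :
      KReach L k (x - p) w y → KReach L k x w y

/-- The `k`-th regular approximation `K^k(L)`. -/
def KApprox {n : ℕ} (L : LinSet n) (k : ℕ) : Language (Sig n) :=
  {w | ∃ y, KReach L k 0 w y ∧ y ∈ L.toSet}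

/-! ### The `⊕⁺` operation and the families `R_ℓ` -/

def posPlus {n : ℕ} (K L : Set (Fin n → ℤ)) : Set (Fin n → ℤ) :=
  {x | (∀ j, 0 ≤ x j) ∧ ∃ a ∈ K, (∀ j, 0 ≤ a j) ∧ ∃ b ∈ L, x = a + b}

def posFoldAux {n : ℕ} : Set (Fin n → ℤ) → List (Set (Fin n → ℤ)) → Set (Fin n → ℤ)
  | S, [] => S
  | S, L :: Ls => posFoldAux (posPlus S L) Ls

/-- `posFold [L₁, …, L_ℓ] = L₁ ⊕⁺ ⋯ ⊕⁺ L_ℓ` (associated to the left); for `ℓ = 1`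
it is `L₁` itself. -/
def posFold {n : ℕ} : List (Set (Fin n → ℤ)) → Set (Fin n → ℤ)
  | [] => ∅
  | L :: Ls => posFoldAux L Ls

/-- The family `R_ℓ`. -/
def RFam (n ℓ : ℕ) : Set (Language (Sig n)) :=
  {K | ∃ (k : ℕ) (Ls : List (LinSet n)), Ls.length = ℓ ∧
      (0 : Fin n → ℤ) ∉ posFold (Ls.map LinSet.toSet) ∧
      K = (Ls.map (fun L => KApprox L k)).prod}

/-- `R_{≤ m} = ⋃_{1 ≤ i ≤ m} R_i`. -/
def RleFam (n m : ℕ) : Set (Language (Sig n)) :=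
  ⋃ i ∈ Set.Icc 1 m, RFam n i

/-- `R = ⋃_{ℓ ≥ 1} R_ℓ`. -/
def RAll (n : ℕ) : Set (Language (Sig n)) :=
  ⋃ i ∈ Set.Ici 1, RFam n i

/-! ### Basic separator sets -/

def IsBasicSepSet {n : ℕ} (S : Language (Sig n)) (B : Set (Language (Sig n))) : Prop :=
  (∀ K ∈ B, K.IsRegular ∧ ∀ w ∈ K, w ∉ S) ∧
  (∀ L : Language (Sig n), L.IsRegular → (∀ w ∈ L, w ∉ S) →
    ∃ F ⊆ B, F.Finite ∧ ∀ w ∈ L, ∃ K ∈ F, w ∈ K)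

/-! Extra defs for specific statements -/

/-- `u ∼_A v`: the words induce the same state transformation in the DFA `M`. -/
def simEq {α σ : Type} (M : DFA α σ) (u v : List α) : Prop :=
  ∀ p : σ, M.evalFrom p u = M.evalFrom p v

/-- Assemble `w₀ m₁ w₁ ⋯ m_k w_k` over `Σ ⊎ Σ#` (`Sum.inl` = plain, `Sum.inr` = marked). -/
def assemble {α : Type} : List (List α) → List α → List (α ⊕ α)
  | [], _ => []
  | w :: _, [] => w.map Sum.inl
  | w :: ws, m :: ms => w.map Sum.inl ++ Sum.inr m :: assemble ws ms

/-- The set of effects of a language. -/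
def effSet {n : ℕ} (L : Language (Sig n)) : Set (Fin n → ℤ) :=
  {v | ∃ w ∈ L, wordEff w = v}

/-- `Mod(μ, v)`. -/
def ModLang (n μ : ℕ) (v : Fin n → ℤ) : Language (Sig n) :=
  {w | ∀ j, wordEff w j ≡ v j [ZMOD (μ : ℤ)]}

/-- `ModSet(μ, v)`: base `v`, periods `{±μ·e_i}`. -/
def ModSet (n μ : ℕ) (v : Fin n → ℤ) : LinSet n where
  base := v
  periods := (Set.range fun i : Fin n => (μ : ℤ) • Pi.single i (1 : ℤ)) ∪
    (Set.range fun i : Fin n => -((μ : ℤ) • Pi.single i (1 : ℤ)))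
  finP := (Set.finite_range _).union (Set.finite_range _)

/-- `Cov(k, i)`. -/
def CovLang (n k : ℕ) (i : Fin n) : Language (Sig n) :=
  {x | ∃ w w', x = w ++ w' ∧ wordEff w i < 0 ∧
      ∀ u, u <+: w → u ≠ w → 0 ≤ wordEff u i ∧ wordEff u i ≤ (k : ℤ)}

/-- `L_{neg,i}`: base `-e_i`, periods `{±e_j : j ≠ i}`. -/
def LNeg (n : ℕ) (i : Fin n) : LinSet n where
  base := -Pi.single i 1
  periods := ((fun j : Fin n => Pi.single j (1 : ℤ)) '' {j | j ≠ i}) ∪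
    ((fun j : Fin n => -Pi.single j (1 : ℤ)) '' {j | j ≠ i})
  finP := ((Set.toFinite _).image _).union ((Set.toFinite _).image _)

/-- `Z`: base `0`, periods `{±e_j}`. -/
def ZSet (n : ℕ) : LinSet n where
  base := 0
  periods := (Set.range fun j : Fin n => Pi.single j (1 : ℤ)) ∪
    (Set.range fun j : Fin n => -Pi.single j (1 : ℤ))
  finP := (Set.finite_range _).union (Set.finite_range _)

/-! The language `C_ℓ` over `Σ₂` -/

def ltrA1 : Sig 2 := (0, true)
def ltrA2 : Sig 2 := (1, true)
def ltrB1 : Sig 2 := (0, false)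
def ltrB2 : Sig 2 := (1, false)

def fwdWord (j : ℕ) : List (Sig 2) := ltrA1 :: List.replicate j ltrA2
def bwdWord (j : ℕ) : List (Sig 2) := ltrB1 :: List.replicate j ltrB2

def segLang (j : ℕ) : Language (Sig 2) :=
  KStar.kstar ({fwdWord j, bwdWord j} : Language (Sig 2))

def aPlusLang : Language (Sig 2) :=
  {w | ∃ m : ℕ, 0 < m ∧ w = List.replicate m ltrA1}

def CLang (ℓ : ℕ) : Language (Sig 2) :=
  aPlusLang * ((List.range ℓ).map (fun j => segLang (j + 1))).prod


/-!
Fix finitely many members of `R_{≤ℓ-1}` and a bound `k` on their boxes, and let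
`N = ((2k+1)²)!`. The word `w = a₁ᴺ ∏_{j ≤ ℓ} (a₁a₂ʲ)ᴺ(ā₁ā₂ʲ)ᴺ` of `C_ℓ` has only nonnegative
prefix effects and total effect `N e₁`. Regrouped as
`a₁ᴺ(a₁a₂)ᴺ · ∏_{j < ℓ} (ā₁ā₂ʲ)ᴺ(a₁a₂ʲ⁺¹)ᴺ · (ā₁ā₂ˡ)ᴺ` it has `ℓ - 1` inner blocks, so a
factorisation of `w` into at most `ℓ - 1` pieces puts a whole block into one piece
`u ∈ K^k(L)`. The box automaton repeats a state inside each half of that block, and since the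
loop length divides `N`, both `N Δ(ā₁ā₂ʲ)` and `N Δ(a₁a₂ʲ⁺¹)` are sums of periods of `L`.
Adding `j + 1` copies of the first and `j` of the second shifts `Δ(u)` by `-N e₁` inside `L`:
the partial sums stay nonnegative because `u` comes after `a₁ᴺ`, and the total becomes `0`,
so `0 ∈ L₁ ⊕⁺ ⋯ ⊕⁺ L_m`.
-/

open List

lemma List.prefix_append_elim {α : Type*} {v p q : List α} (h : v <+: p ++ q) :
    v <+: p ∨ ∃ r, r <+: q ∧ v = p ++ r := by
  obtain ⟨t, ht⟩ := h
  rcases List.append_eq_append_iff.1 ht with ⟨s, rfl, -⟩ | ⟨r, rfl, rfl⟩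
  · exact Or.inl (prefix_append v s)
  · exact Or.inr ⟨r, prefix_append r t, rfl⟩

lemma List.sum_take_append_cons_add {M : Type*} [AddCommMonoid M] (l₁ l₂ : List M) (x a : M)
    (m : ℕ) : ((l₁ ++ (x + a) :: l₂).take m).sum =
      ((l₁ ++ x :: l₂).take m).sum + if l₁.length < m then a else 0 := by
  induction l₁ generalizing m with
  | nil => cases m <;> simp [add_right_comm]
  | cons y l₁ ih => cases m <;> simp [ih, add_assoc]

lemma List.flatten_map_range_succ_append {α : Type*} (f g : ℕ → List α) (m : ℕ) :
    ((range (m + 1)).map fun j => f j ++ g j).flatten =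
      f 0 ++ ((range m).map fun j => g j ++ f (j + 1)).flatten ++ g m := by
  induction m with
  | zero => simp
  | succ m ih => rw [range_succ, map_append, flatten_append, ih]; simp [range_succ]

lemma List.exists_infix_of_flatten_eq {α : Type*} {Ys us : List (List α)} {P T : List α}
    (h : us.flatten = P ++ Ys.flatten ++ T) (hne : us ≠ []) (hlen : us.length ≤ Ys.length) :
    ∃ Y ∈ Ys, ∃ u ∈ us, Y <:+: u := by
  induction Ys generalizing us P with
  | nil => simp_all
  | cons Y Ys ih =>
    obtain ⟨u, us, rfl⟩ := exists_cons_of_ne_nil hne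
    have hu : u <+: (P ++ Y) ++ (Ys.flatten ++ T) := ⟨us.flatten, by simpa using h⟩
    have hPY : P ++ Y <+: (P ++ Y) ++ (Ys.flatten ++ T) := prefix_append _ _
    by_cases hlong : (P ++ Y).length ≤ u.length
    · exact ⟨Y, mem_cons_self, u, mem_cons_self,
        infix_append_right.trans (prefix_of_prefix_length_le hPY hu hlong).isInfix⟩
    · obtain ⟨r, hr⟩ := prefix_of_prefix_length_le hu hPY (by omega)
      have h' : us.flatten = r ++ Ys.flatten ++ T := by
        apply append_cancel_left (as := u)
        simp only [← append_assoc, hr]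
        simpa using h
      have hus : us ≠ [] := by
        rintro rfl
        have h₁ := congrArg length h'
        have h₂ := congrArg length hr
        simp only [flatten_nil, length_append, length_nil] at h₁ h₂ hlong
        omega
      obtain ⟨Y', hY', u', hu', hinf⟩ := ih h' hus (by simpa using hlen)
      exact ⟨Y', mem_cons_of_mem Y hY', u', mem_cons_of_mem u hu', hinf⟩

lemma Language.exists_of_mem_prod_map {α β : Type*} {f : β → Language α} {bs : List β} {w : List α}
    (h : w ∈ (bs.map f).prod) : ∃ ps : List (List α × β), ps.map Prod.snd = bs ∧
      (ps.map Prod.fst).flatten = w ∧ ∀ p ∈ ps, p.1 ∈ f p.2 := by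
  induction bs generalizing w with
  | nil => exact ⟨[], rfl, by simpa [Language.mem_one] using h.symm, by simp⟩
  | cons b bs ih =>
    obtain ⟨u, hu, v, hv, rfl⟩ := Language.mem_mul.1 h
    obtain ⟨ps, rfl, rfl, hps⟩ := ih hv
    exact ⟨(u, b) :: ps, rfl, rfl, by simpa [hu] using hps⟩

lemma Language.flatten_mem_prod_map {α β : Type*} {f : β → Language α} {g : β → List α}
    {bs : List β} (h : ∀ b ∈ bs, g b ∈ f b) : (bs.map g).flatten ∈ (bs.map f).prod := by
  induction bs with
  | nil => simp [Language.mem_one]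
  | cons b bs ih =>
    exact Language.mem_mul.2 ⟨g b, h b mem_cons_self, _, ih fun c hc => h c (mem_cons_of_mem b hc),
      rfl⟩

section WordEffect

variable {n : ℕ}

@[simp] lemma wordEff_nil : wordEff ([] : List (Sig n)) = 0 := rfl

@[simp] lemma wordEff_cons (a : Sig n) (w : List (Sig n)) :
    wordEff (a :: w) = letterEff a + wordEff w := by
  simp [wordEff]

@[simp] lemma wordEff_append (u v : List (Sig n)) :
    wordEff (u ++ v) = wordEff u + wordEff v := by
  simp [wordEff]

lemma wordEff_flatten (ws : List (List (Sig n))) :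
    wordEff ws.flatten = (ws.map wordEff).sum := by
  induction ws with
  | nil => rfl
  | cons w ws ih => simp [ih]

@[simp] lemma wordEff_replicate (m : ℕ) (a : Sig n) :
    wordEff (replicate m a) = m • letterEff a := by
  simp [wordEff]

@[simp] lemma wordEff_flatten_replicate (m : ℕ) (w : List (Sig n)) :
    wordEff (replicate m w).flatten = m • wordEff w := by
  simp [wordEff_flatten]

lemma letterEff_false (i : Fin n) : letterEff (i, false) = -letterEff (i, true) := by
  ext j
  by_cases h : j = i <;> simp [letterEff, h]

lemma wordEff_nonneg_of_forall_snd {w : List (Sig n)} (hw : ∀ a ∈ w, a.2 = true) :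
    0 ≤ wordEff w := by
  induction w with
  | nil => simp
  | cons a w ih =>
    have ha : 0 ≤ letterEff a := fun j => by
      simp only [letterEff, hw a mem_cons_self]
      split_ifs <;> simp_all
    simpa using add_nonneg ha (ih fun b hb => hw b (mem_cons_of_mem a hb))

lemma wordEff_nonpos_of_forall_not_snd {w : List (Sig n)} (hw : ∀ a ∈ w, a.2 = false) :
    wordEff w ≤ 0 := by
  induction w with
  | nil => simp
  | cons a w ih =>
    have ha : letterEff a ≤ 0 := fun j => by
      simp only [letterEff, hw a mem_cons_self]
      split_ifs <;> simp_all
    simpa using add_nonpos ha (ih fun b hb => hw b (mem_cons_of_mem a hb))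

end WordEffect

section CovDyck

variable {n : ℕ}

lemma mem_covDyck_iff {w : List (Sig n)} : w ∈ CovDyck n ↔ ∀ v, v <+: w → 0 ≤ wordEff v :=
  Iff.rfl

lemma append_mem_covDyck {u v : List (Sig n)} (hu : u ∈ CovDyck n) (hv : v ∈ CovDyck n) :
    u ++ v ∈ CovDyck n := by
  rw [mem_covDyck_iff] at *
  intro x hx
  rcases List.prefix_append_elim hx with hx | ⟨r, hr, rfl⟩
  · exact hu x hx
  · simpa using add_nonneg (hu u prefix_rfl) (hv r hr)

lemma flatten_mem_covDyck {ws : List (List (Sig n))} (hws : ∀ w ∈ ws, w ∈ CovDyck n) :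
    ws.flatten ∈ CovDyck n := by
  induction ws with
  | nil => simp [mem_covDyck_iff]
  | cons w ws ih =>
    exact append_mem_covDyck (hws w mem_cons_self) (ih fun v hv => hws v (mem_cons_of_mem w hv))

lemma mem_covDyck_of_forall_snd {w : List (Sig n)} (hw : ∀ a ∈ w, a.2 = true) :
    w ∈ CovDyck n :=
  fun v hv => wordEff_nonneg_of_forall_snd fun a ha => hw a (hv.subset ha)

lemma append_mem_covDyck_of_forall_snd {u v : List (Sig n)} (hu : ∀ a ∈ u, a.2 = true)
    (hv : ∀ a ∈ v, a.2 = false) (huv : 0 ≤ wordEff (u ++ v)) : u ++ v ∈ CovDyck n := by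
  rw [mem_covDyck_iff]
  intro x hx
  rcases List.prefix_append_elim hx with hx | ⟨r, ⟨s, rfl⟩, rfl⟩
  · exact mem_covDyck_of_forall_snd hu x hx
  · have hs : wordEff s ≤ 0 :=
      wordEff_nonpos_of_forall_not_snd fun a ha => hv a (mem_append_right r ha)
    calc 0 ≤ wordEff (u ++ (r ++ s)) := huv
      _ ≤ wordEff (u ++ r) := by
        simpa only [wordEff_append, ← add_assoc] using add_le_of_nonpos_right hs

end CovDyck

lemma exists_lt_eq_of_inBox {n k : ℕ} {st : ℕ → Fin n → ℤ}
    (h : ∀ r ≤ (2 * k + 1) ^ n, inBox k (st r)) :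
    ∃ r₁ r₂, r₁ < r₂ ∧ r₂ ≤ (2 * k + 1) ^ n ∧ st r₁ = st r₂ := by
  let box := Fintype.piFinset fun _ : Fin n => Finset.Icc (-(k : ℤ)) k
  have hcard : box.card < (Finset.range ((2 * k + 1) ^ n + 1)).card := by
    simp only [box, Fintype.card_piFinset, Int.card_Icc, Finset.prod_const, Finset.card_univ,
      Fintype.card_fin, Finset.card_range]
    rw [show ((k : ℤ) + 1 - -(k : ℤ)).toNat = 2 * k + 1 by omega]
    exact Nat.lt_succ_self _
  obtain ⟨r₁, h₁, r₂, h₂, hne, heq⟩ := Finset.exists_ne_map_eq_of_card_lt_of_maps_to hcard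
    (f := st) fun r hr => Fintype.mem_piFinset.2 fun j =>
      Finset.mem_Icc.2 (h r (Nat.lt_succ_iff.1 (Finset.mem_range.1 hr)) j)
  rw [Finset.mem_range] at h₁ h₂
  rcases hne.lt_or_gt with hlt | hlt
  · exact ⟨r₁, r₂, hlt, by omega, heq⟩
  · exact ⟨r₂, r₁, hlt, by omega, heq.symm⟩

namespace KReach

variable {n k : ℕ} {L : LinSet n} {x y : Fin n → ℤ} {w : List (Sig n)}

lemma inBox_left (h : KReach L k x w y) : inBox k x := by
  cases h <;> assumption

lemma append {z : Fin n → ℤ} {v : List (Sig n)} (h : KReach L k x w y)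
    (h' : KReach L k y v z) : KReach L k x (w ++ v) z := by
  induction h with
  | refl => exact h'
  | letter a hx hx' _ ih => exact letter a hx hx' (ih h')
  | eps hp hx hx' _ ih => exact eps hp hx hx' (ih h')

lemma exists_of_append {v : List (Sig n)} (h : KReach L k x (w ++ v) y) :
    ∃ z, KReach L k x w z ∧ KReach L k z v y := by
  generalize hW : w ++ v = W at h
  induction h generalizing w with
  | refl x hx =>
    obtain ⟨rfl, rfl⟩ := List.append_eq_nil_iff.1 hW
    exact ⟨x, refl x hx, refl x hx⟩
  | letter a hx hx' htail ih =>
    rcases w with _ | ⟨b, w⟩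
    · subst hW
      exact ⟨_, refl _ hx, letter a hx hx' htail⟩
    · rw [cons_append] at hW
      obtain ⟨rfl, hW'⟩ := List.cons.inj hW
      obtain ⟨z, h₁, h₂⟩ := ih hW'
      exact ⟨z, letter b hx hx' h₁, h₂⟩
  | eps hp hx hx' _ ih =>
    obtain ⟨z, h₁, h₂⟩ := ih hW
    exact ⟨z, eps hp hx hx' h₁, h₂⟩

lemma exists_of_infix {v : List (Sig n)} (h : KReach L k x w y) (hv : v <:+: w) :
    ∃ x' y', KReach L k x' v y' := by
  obtain ⟨s, t, rfl⟩ := hv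
  obtain ⟨y', h, -⟩ := h.exists_of_append
  obtain ⟨x', -, h⟩ := h.exists_of_append
  exact ⟨x', y', h⟩

lemma exists_add_wordEff_eq (h : KReach L k x w y) :
    ∃ p ∈ AddSubmonoid.closure L.periods, x + wordEff w = y + p := by
  induction h with
  | refl x => exact ⟨0, zero_mem _, by simp⟩
  | letter a _ _ _ ih =>
    obtain ⟨p, hp, hx⟩ := ih
    exact ⟨p, hp, by rw [wordEff_cons, ← add_assoc, hx]⟩
  | @eps x _ w q hq _ _ _ ih =>
    obtain ⟨p, hp, hx⟩ := ih
    refine ⟨p + q, add_mem hp (AddSubmonoid.subset_closure hq), ?_⟩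
    rw [← add_assoc, ← hx]
    abel

lemma exists_states_of_replicate {m : ℕ} {z : List (Sig n)}
    (h : KReach L k x (replicate m z).flatten y) :
    ∃ st : ℕ → Fin n → ℤ, st 0 = x ∧ (∀ r ≤ m, inBox k (st r)) ∧
      ∀ r < m, KReach L k (st r) z (st (r + 1)) := by
  induction m generalizing x with
  | zero => exact ⟨fun _ => x, rfl, fun _ _ => h.inBox_left, fun r hr => absurd hr r.not_lt_zero⟩
  | succ m ih =>
    rw [replicate_succ, flatten_cons] at h
    obtain ⟨x', hz, hrest⟩ := h.exists_of_append
    obtain ⟨st, rfl, hbox, hstep⟩ := ih hrest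
    refine ⟨fun r => match r with | 0 => x | r + 1 => st r, rfl, fun r hr => ?_, fun r hr => ?_⟩
    · cases r with
      | zero => exact hz.inBox_left
      | succ r => exact hbox r (by omega)
    · cases r with
      | zero => exact hz
      | succ r => exact hstep r (by omega)

lemma replicate_of_states {m : ℕ} {z : List (Sig n)} {st : ℕ → Fin n → ℤ}
    (hbox : ∀ r ≤ m, inBox k (st r)) (hstep : ∀ r < m, KReach L k (st r) z (st (r + 1)))
    {r d : ℕ} (h : r + d ≤ m) : KReach L k (st r) (replicate d z).flatten (st (r + d)) := by
  induction d generalizing r with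
  | zero => exact refl _ (hbox r h)
  | succ d ih =>
    rw [replicate_succ, flatten_cons, show r + (d + 1) = r + 1 + d by omega]
    exact (hstep r (by omega)).append (ih (by omega))

/-- Two of the first `(2k+1)^n + 1` block boundaries of the run carry the same state of the box,
and the ε-transitions must have absorbed the effect of the power of `z` read in between. -/
lemma exists_nsmul_mem_closure_of_replicate {N : ℕ} {z : List (Sig n)}
    (hN : (2 * k + 1) ^ n ≤ N) (h : KReach L k x (replicate N z).flatten y) :
    ∃ d, 0 < d ∧ d ≤ (2 * k + 1) ^ n ∧ d • wordEff z ∈ AddSubmonoid.closure L.periods := by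
  obtain ⟨st, -, hbox, hstep⟩ := h.exists_states_of_replicate
  obtain ⟨r₁, r₂, hlt, hle, heq⟩ := exists_lt_eq_of_inBox fun r hr => hbox r (hr.trans hN)
  have hloop := replicate_of_states hbox hstep (r := r₁) (d := r₂ - r₁) (by omega)
  rw [Nat.add_sub_cancel' hlt.le, ← heq] at hloop
  obtain ⟨p, hp, hx⟩ := hloop.exists_add_wordEff_eq
  rw [wordEff_flatten_replicate, add_left_cancel_iff] at hx
  exact ⟨r₂ - r₁, by omega, by omega, hx ▸ hp⟩

lemma nsmul_mem_closure_of_replicate {N : ℕ} {z : List (Sig n)}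
    (hN : ((2 * k + 1) ^ n).factorial ∣ N) (h : KReach L k x (replicate N z).flatten y) :
    N • wordEff z ∈ AddSubmonoid.closure L.periods := by
  rcases N.eq_zero_or_pos with rfl | hpos
  · simp
  obtain ⟨d, hd, hdB, hmem⟩ := h.exists_nsmul_mem_closure_of_replicate
    ((Nat.self_le_factorial _).trans (Nat.le_of_dvd hpos hN))
  obtain ⟨c, rfl⟩ := (Nat.dvd_factorial hd hdB).trans hN
  rw [mul_nsmul]
  exact nsmul_mem hmem c

end KReach

section KApprox

variable {n k : ℕ} {L : LinSet n} {u : List (Sig n)}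

lemma LinSet.add_mem_toSet {v c : Fin n → ℤ} (hv : v ∈ L.toSet)
    (hc : c ∈ AddSubmonoid.closure L.periods) : v + c ∈ L.toSet := by
  obtain ⟨p, hp, rfl⟩ := hv
  exact ⟨p + c, add_mem hp hc, by abel⟩

lemma wordEff_mem_toSet_of_mem_KApprox (hu : u ∈ KApprox L k) : wordEff u ∈ L.toSet := by
  obtain ⟨y, hr, hy⟩ := hu
  obtain ⟨p, hp, hx⟩ := hr.exists_add_wordEff_eq
  rw [zero_add] at hx
  exact hx ▸ LinSet.add_mem_toSet hy hp

lemma nsmul_wordEff_mem_closure_of_infix {N : ℕ} {z : List (Sig n)} (hu : u ∈ KApprox L k)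
    (hz : (replicate N z).flatten <:+: u) (hN : ((2 * k + 1) ^ n).factorial ∣ N) :
    N • wordEff z ∈ AddSubmonoid.closure L.periods := by
  obtain ⟨y, hr, -⟩ := hu
  obtain ⟨x', y', hr'⟩ := hr.exists_of_infix hz
  exact hr'.nsmul_mem_closure_of_replicate hN

end KApprox

section PosFold

variable {n : ℕ}

lemma add_sum_mem_posFoldAux {T : Set (Fin n → ℤ)} {a : Fin n → ℤ} (ha : a ∈ T)
    {ps : List ((Fin n → ℤ) × Set (Fin n → ℤ))} (hmem : ∀ p ∈ ps, p.1 ∈ p.2)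
    (hpos : ∀ m, 0 ≤ a + ((ps.map Prod.fst).take m).sum) :
    a + (ps.map Prod.fst).sum ∈ posFoldAux T (ps.map Prod.snd) := by
  induction ps generalizing T a with
  | nil => simpa [posFoldAux] using ha
  | cons p ps ih =>
    rw [map_cons, map_cons, sum_cons, ← add_assoc]
    refine ih ⟨fun j => by simpa using hpos 1 j, a, ha, fun j => by simpa using hpos 0 j,
      p.1, hmem p mem_cons_self, rfl⟩ (fun q hq => hmem q (mem_cons_of_mem p hq)) fun m => ?_
    simpa [add_assoc] using hpos (m + 1)

lemma sum_mem_posFold {ps : List ((Fin n → ℤ) × Set (Fin n → ℤ))} (hne : ps ≠ [])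
    (hmem : ∀ p ∈ ps, p.1 ∈ p.2) (hpos : ∀ m, 0 ≤ ((ps.map Prod.fst).take m).sum) :
    (ps.map Prod.fst).sum ∈ posFold (ps.map Prod.snd) := by
  obtain ⟨p, ps, rfl⟩ := exists_cons_of_ne_nil hne
  simpa [posFold] using add_sum_mem_posFoldAux (hmem p mem_cons_self)
    (fun q hq => hmem q (mem_cons_of_mem p hq)) fun m => by simpa using hpos (m + 1)

end PosFold

section PumpedFactor

variable {n : ℕ}

lemma wordEff_add_mem_posFold {ps₁ ps₂ : List (List (Sig n) × LinSet n)} {u w : List (Sig n)}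
    {L : LinSet n} {a : Fin n → ℤ} (hw : ((ps₁ ++ (u, L) :: ps₂).map Prod.fst).flatten = w)
    (hmem : ∀ p ∈ ps₁ ++ ps₂, wordEff p.1 ∈ p.2.toSet) (hu : wordEff u + a ∈ L.toSet)
    (hcov : w ∈ CovDyck n) (hlong : ∀ v, v <+: w → u.length ≤ v.length → 0 ≤ wordEff v + a) :
    wordEff w + a ∈ posFold ((ps₁ ++ (u, L) :: ps₂).map (LinSet.toSet ∘ Prod.snd)) := by
  let f (p : List (Sig n) × LinSet n) : (Fin n → ℤ) × Set (Fin n → ℤ) := (wordEff p.1, p.2.toSet)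
  let qs := ps₁.map f ++ (wordEff u + a, L.toSet) :: ps₂.map f
  have hfst : qs.map Prod.fst =
      ps₁.map (wordEff ∘ Prod.fst) ++ (wordEff u + a) :: ps₂.map (wordEff ∘ Prod.fst) := by
    simp [qs, f, Function.comp_def]
  have hprefix (m : ℕ) :
      ((ps₁.map (wordEff ∘ Prod.fst) ++ wordEff u :: ps₂.map (wordEff ∘ Prod.fst)).take m).sum =
        wordEff (((ps₁ ++ (u, L) :: ps₂).map Prod.fst).take m).flatten := by
    rw [wordEff_flatten, map_take]
    simp [Function.comp_def]
  have key : (qs.map Prod.fst).sum ∈ posFold (qs.map Prod.snd) := by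
    refine sum_mem_posFold (by simp [qs]) (fun p hp => ?_) fun m => ?_
    · simp only [qs, mem_append, mem_map, mem_cons] at hp
      rcases hp with ⟨q, hq, rfl⟩ | rfl | ⟨q, hq, rfl⟩
      · exact hmem q (mem_append_left _ hq)
      · exact hu
      · exact hmem q (mem_append_right _ hq)
    · have hpre : (((ps₁ ++ (u, L) :: ps₂).map Prod.fst).take m).flatten <+: w :=
        hw ▸ (take_prefix m _).flatten
      rw [hfst, sum_take_append_cons_add, length_map, hprefix]
      split_ifs with hm
      · refine hlong _ hpre (IsInfix.length_le (infix_of_mem_flatten ?_))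
        rw [map_append, map_cons, take_append, mem_append, length_map,
          show m - ps₁.length = m - ps₁.length - 1 + 1 by omega, take_succ_cons]
        exact Or.inr mem_cons_self
      · rw [add_zero]
        exact hcov _ hpre
  have hsum : (qs.map Prod.fst).sum = wordEff w + a := by
    rw [hfst, ← hw, wordEff_flatten]
    simp [Function.comp_def]
    abel
  have hsnd : qs.map Prod.snd = (ps₁ ++ (u, L) :: ps₂).map (LinSet.toSet ∘ Prod.snd) := by
    simp [qs, f, Function.comp_def]
  rwa [hsum, hsnd] at key

end PumpedFactor

section CWitness

def fwdBlock (j N : ℕ) : List (Sig 2) := (replicate N (fwdWord j)).flatten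

def bwdBlock (j N : ℕ) : List (Sig 2) := (replicate N (bwdWord j)).flatten

def cStars (ℓ N : ℕ) : List (Sig 2) :=
  ((range ℓ).map fun j => fwdBlock (j + 1) N ++ bwdBlock (j + 1) N).flatten

def cWitness (ℓ N : ℕ) : List (Sig 2) := replicate N ltrA1 ++ cStars ℓ N

lemma cWitness_mem_CLang (ℓ : ℕ) {N : ℕ} (hN : 0 < N) : cWitness ℓ N ∈ CLang ℓ := by
  refine Language.mem_mul.2 ⟨_, ⟨N, hN, rfl⟩, _, Language.flatten_mem_prod_map fun j _ => ?_, rfl⟩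
  refine Language.mem_kstar.2 ⟨replicate N (fwdWord (j + 1)) ++ replicate N (bwdWord (j + 1)),
    by simp [fwdBlock, bwdBlock], fun y hy => ?_⟩
  simp only [mem_append, mem_replicate] at hy
  rcases hy with ⟨-, rfl⟩ | ⟨-, rfl⟩
  exacts [Or.inl rfl, Or.inr rfl]

lemma cWitness_succ (m N : ℕ) : cWitness (m + 1) N = (replicate N ltrA1 ++ fwdBlock 1 N) ++
    ((range m).map fun j => bwdBlock (j + 1) N ++ fwdBlock (j + 2) N).flatten ++
      bwdBlock (m + 1) N := by
  simp [cWitness, cStars, flatten_map_range_succ_append]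

lemma le_length_bwdBlock (j N : ℕ) : N ≤ (bwdBlock j N).length := by
  simpa [bwdBlock, bwdWord, length_flatten] using Nat.le_mul_of_pos_right N j.succ_pos

lemma wordEff_bwdWord (j : ℕ) : wordEff (bwdWord j) = -wordEff (fwdWord j) := by
  simp [bwdWord, fwdWord, ltrA1, ltrA2, ltrB1, ltrB2, letterEff_false]
  abel

lemma wordEff_fwdBlock_append_bwdBlock (j N : ℕ) :
    wordEff (fwdBlock j N ++ bwdBlock j N) = 0 := by
  simp [fwdBlock, bwdBlock, wordEff_bwdWord]

lemma wordEff_cStars (ℓ N : ℕ) : wordEff (cStars ℓ N) = 0 := by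
  simp [cStars, wordEff_flatten, Function.comp_def, -wordEff_append,
    wordEff_fwdBlock_append_bwdBlock]

lemma wordEff_cWitness (ℓ N : ℕ) : wordEff (cWitness ℓ N) = N • letterEff ltrA1 := by
  simp [cWitness, wordEff_cStars]

lemma nsmul_wordEff_bwdWord_add (j : ℕ) :
    (j + 1) • wordEff (bwdWord j) + j • wordEff (fwdWord (j + 1)) = -letterEff ltrA1 := by
  rw [wordEff_bwdWord]
  simp only [fwdWord, wordEff_cons, wordEff_replicate]
  module

lemma cStars_mem_covDyck (ℓ N : ℕ) : cStars ℓ N ∈ CovDyck 2 := by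
  refine flatten_mem_covDyck fun w hw => ?_
  obtain ⟨j, -, rfl⟩ := mem_map.1 hw
  refine append_mem_covDyck_of_forall_snd ?_ ?_ ?_
  · simp [fwdBlock, fwdWord, ltrA1, ltrA2]
  · simp [bwdBlock, bwdWord, ltrB1, ltrB2]
  · rw [wordEff_fwdBlock_append_bwdBlock]

lemma cWitness_mem_covDyck (ℓ N : ℕ) : cWitness ℓ N ∈ CovDyck 2 :=
  append_mem_covDyck (mem_covDyck_of_forall_snd (by simp [ltrA1])) (cStars_mem_covDyck ℓ N)

lemma le_wordEff_of_prefix_cWitness {ℓ N : ℕ} {v : List (Sig 2)} (hv : v <+: cWitness ℓ N)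
    (hN : N ≤ v.length) : N • letterEff ltrA1 ≤ wordEff v := by
  rcases List.prefix_append_elim hv with hv | ⟨r, hr, rfl⟩
  · rw [hv.eq_of_length (le_antisymm (by simpa using hv.length_le) (by simpa using hN))]
    simp
  · rw [wordEff_append, wordEff_replicate]
    exact le_add_of_nonneg_right (cStars_mem_covDyck ℓ N r hr)

end CWitness

theorem cWitness_notMem_prod {ℓ k N : ℕ} {Ls : List (LinSet 2)} (hne : Ls ≠ [])
    (hlen : Ls.length < ℓ) (h0 : 0 ∉ posFold (Ls.map LinSet.toSet))
    (hN : ((2 * k + 1) ^ 2).factorial ∣ N) :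
    cWitness ℓ N ∉ (Ls.map (KApprox · k)).prod := by
  intro hw
  obtain ⟨m, rfl⟩ : ∃ m, ℓ = m + 1 := ⟨ℓ - 1, by omega⟩
  obtain ⟨ps, rfl, hflat, hmem⟩ := Language.exists_of_mem_prod_map hw
  obtain ⟨_, hY, u, hu, hinf⟩ := List.exists_infix_of_flatten_eq (hflat.trans (cWitness_succ m N))
    (by simpa using hne) (by simpa using hlen)
  obtain ⟨q, -, rfl⟩ := mem_map.1 hY
  obtain ⟨⟨u, L⟩, hp, rfl⟩ := mem_map.1 hu
  obtain ⟨ps₁, ps₂, rfl⟩ := append_of_mem hp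
  have hbwd := nsmul_wordEff_mem_closure_of_infix (hmem _ hp) (infix_append_left.trans hinf) hN
  have hfwd := nsmul_wordEff_mem_closure_of_infix (hmem _ hp) (infix_append_right.trans hinf) hN
  have hshift : (q + 2) • N • wordEff (bwdWord (q + 1)) + (q + 1) • N • wordEff (fwdWord (q + 2))
      = -(N • letterEff ltrA1) := by
    rw [smul_comm _ N, smul_comm _ N, ← smul_add, nsmul_wordEff_bwdWord_add, smul_neg]
  have hu : wordEff u + -(N • letterEff ltrA1) ∈ L.toSet :=
    hshift ▸ LinSet.add_mem_toSet (wordEff_mem_toSet_of_mem_KApprox (hmem _ hp))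
      (add_mem (nsmul_mem hbwd _) (nsmul_mem hfwd _))
  have hlong (v : List (Sig 2)) (hv : v <+: cWitness (m + 1) N) (hvu : u.length ≤ v.length) :
      0 ≤ wordEff v + -(N • letterEff ltrA1) := by
    have hNu := (le_length_bwdBlock (q + 1) N).trans (infix_append_left.trans hinf).length_le
    simpa [← sub_eq_add_neg] using le_wordEff_of_prefix_cWitness hv (hNu.trans hvu)
  have := wordEff_add_mem_posFold hflat (fun p hp' => wordEff_mem_toSet_of_mem_KApprox
    (hmem p (by simp only [mem_append, mem_cons] at hp' ⊢; tauto))) hu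
    (cWitness_mem_covDyck _ N) hlong
  rw [wordEff_cWitness, add_neg_cancel, ← map_map] at this
  exact h0 this

theorem stmt17_general (ℓ : ℕ) :
    ¬ ∃ F : Set (Language (Sig 2)), F.Finite ∧ F ⊆ RleFam 2 (ℓ - 1) ∧
      ∀ w ∈ CLang ℓ, ∃ K ∈ F, w ∈ K := by
  rintro ⟨F, hF, hsub, hcov⟩
  have hK (K) (hK : K ∈ F) : ∃ k, ∃ Ls : List (LinSet 2), Ls ≠ [] ∧ Ls.length < ℓ ∧
      0 ∉ posFold (Ls.map LinSet.toSet) ∧ K = (Ls.map (KApprox · k)).prod := by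
    obtain ⟨i, ⟨hi₁, hi₂⟩, k, Ls, rfl, h0, rfl⟩ : ∃ i ∈ Set.Icc 1 (ℓ - 1), K ∈ RFam 2 i := by
      simpa [RleFam] using hsub hK
    exact ⟨k, Ls, ne_nil_of_length_pos hi₁, by omega, h0, rfl⟩
  choose! κ hκ using hK
  obtain ⟨B, hB⟩ := (hF.image κ).bddAbove
  obtain ⟨K, hKF, hwK⟩ := hcov _ (cWitness_mem_CLang ℓ (Nat.factorial_pos ((2 * B + 1) ^ 2)))
  obtain ⟨Ls, hne, hlen, h0, hKeq⟩ := hκ K hKF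
  have hκB : κ K ≤ B := hB (Set.mem_image_of_mem κ hKF)
  exact cWitness_notMem_prod hne hlen h0
    (Nat.factorial_dvd_factorial (Nat.pow_le_pow_left (by omega) 2)) (hKeq ▸ hwK)

theorem stmt17 (ℓ : ℕ) (hl : 1 ≤ ℓ) :
    ¬ ∃ F : Set (Language (Sig 2)), F.Finite ∧ F ⊆ RleFam 2 (ℓ - 1) ∧
      ∀ w ∈ CLang ℓ, ∃ K ∈ F, w ∈ K :=
  stmt17_general ℓ
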